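/- arXiv:1604.01470 — 2 statements merged into one kernel-verified Lean document; each statement's English description precedes it below -/
import Mathlib

section
/- Suppose λ(β) > 0. Then for every δ with 1 < δ < 1 + λ(β), the set E_δ = {x ∈ (0,1] : limsup_{n→∞} (−log_β |I_n(x)|)/n = δ} is of the first category (meagre) in [0,1]. -/
/-!
On the cylinder `I_n(x)` the map `T_β^n` is affine of slope `β^n`, so `I_n(x)` is an interval
of length at most `β^{-n}` around `x`, and appending enough zero digits to those of `x` yields a
full cylinder of some order `p` inside `I_n(x)`, mapped by `T_β^p` onto `(0,1]`. The points `y`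
of that full cylinder with `T_β^p y ∈ I_m(1)` form an open set, and
`|I_{p+m}(y)| ≤ |I_m(1)| β^{-p} ≤ β^{-(p+m+t_m)}`, because the first `t_m` digits of `T_β^m 1`
vanish. Since `t_m ≥ γ m` infinitely often for `γ < λ(β)`, for `δ < c < 1 + λ(β)` the set of
`x` with `|I_n(x)| ≤ β^{-cn}` for some `n ≥ N` has an interior dense in `[0,1]`. A point in all
these interiors has upper density at least `c`, so `E_δ` lies in a countable union of closed
nowhere dense sets.
-/

open MeasureTheory Filter Set

noncomputable section

/-- The β-transformation on `(0,1]`: `T_β x = βx − ⌈βx⌉ + 1`. -/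
def Tbeta (β x : ℝ) : ℝ := β * x - ⌈β * x⌉ + 1

/-- The digits of the β-expansion, 0-indexed: `eps β x n` is the `(n+1)`-st digit
`ε_{n+1}(x,β) = ⌈β T_β^n x⌉ − 1`. -/
def eps (β x : ℝ) (n : ℕ) : ℤ := ⌈β * (Tbeta β)^[n] x⌉ - 1

/-- The basic interval of order `n` containing `x`:
all `y ∈ (0,1]` whose first `n` digits agree with those of `x`. -/
def In (β x : ℝ) (n : ℕ) : Set ℝ := {y ∈ Ioc (0:ℝ) 1 | ∀ j < n, eps β y j = eps β x j}

/-- The length of a set (Lebesgue measure). -/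
def len (s : Set ℝ) : ℝ := (volume s).toReal

/-- `tseq β n = t_n`: the maximal length of the block of zero digits of the
β-expansion of `1` immediately following position `n` (digits `ε*_{n+1},…,ε*_{n+k}`). -/
def tseq (β : ℝ) (n : ℕ) : ℕ := sSup {k : ℕ | ∀ j < k, eps β 1 (n + j) = 0}

/-- `Gam β n = Γ_n = max_{1 ≤ k ≤ n} t_k`. -/
def Gam (β : ℝ) (n : ℕ) : ℕ := Finset.sup (Finset.Icc 1 n) (tseq β)

/-- `lam β = λ(β) = limsup_n Γ_n / n`. -/
def lam (β : ℝ) : ℝ := Filter.limsup (fun n : ℕ => (Gam β n : ℝ) / n) atTop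

/-- `kstar β x n = k_n^*(x)`: the smallest `k ≥ 0` such that
`(ε_{k+1}(x),…,ε_n(x)) = (ε*_1,…,ε*_{n−k})`. -/
def kstar (β x : ℝ) (n : ℕ) : ℕ := sInf {k : ℕ | ∀ i < n - k, eps β x (k + i) = eps β 1 i}

/-- `tau β x = τ(x) = limsup_n t_{n − k_n^*(x)} / n`. -/
def tau (β x : ℝ) : ℝ :=
  Filter.limsup (fun n : ℕ => (tseq β (n - kstar β x n) : ℝ) / n) atTop

/-- The upper density `\overline{D}(x) = limsup_n (−log_β |I_n(x)|)/n`. -/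
def upperD (β x : ℝ) : ℝ :=
  Filter.limsup (fun n : ℕ => -Real.logb β (len (In β x n)) / n) atTop

/-- The lower density `\underline{D}(x) = liminf_n (−log_β |I_n(x)|)/n`. -/
def lowerD (β x : ℝ) : ℝ :=
  Filter.liminf (fun n : ℕ => -Real.logb β (len (In β x n)) / n) atTop

/-- The basic interval (cylinder) associated to a finite word `w` of digits:
all `x ∈ (0,1]` whose β-expansion starts with `w`. -/
def cyl (β : ℝ) (w : List ℤ) : Set ℝ :=
  {x ∈ Ioc (0:ℝ) 1 | ∀ j < w.length, eps β x j = w.getD j 0}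

/-- A finite word is admissible if it occurs as the initial digits of some `x ∈ (0,1]`. -/
def Admissible (β : ℝ) (w : List ℤ) : Prop := (cyl β w).Nonempty

/-- A basic interval is full if its length is `β^{−n}` where `n` is the order. -/
def IsFull (β : ℝ) (w : List ℤ) : Prop := len (cyl β w) = β ^ (-(w.length : ℤ))

/-- The word `(ε*_1,…,ε*_n)` of the first `n` digits of the β-expansion of `1`. -/
def estarWord (β : ℝ) (n : ℕ) : List ℤ := (List.range n).map (eps β 1)

/-- The interior of a set relative to the subspace `[0,1]`
(for `S ⊆ [0,1]` this is exactly the interior of `S` in the topology of `[0,1]`). -/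
def intIn01 (S : Set ℝ) : Set ℝ := Icc 0 1 \ closure (Icc 0 1 \ S)


section BetaExpansion

variable {β c γ x y z : ℝ}

lemma Tbeta_mem_Ioc (β z : ℝ) : Tbeta β z ∈ Ioc 0 1 := by
  unfold Tbeta
  constructor <;> linarith [Int.ceil_lt_add_one (β * z), Int.le_ceil (β * z)]

lemma iterate_Tbeta_mem_Ioc (β : ℝ) (hx : x ∈ Ioc 0 1) : ∀ n, (Tbeta β)^[n] x ∈ Ioc 0 1
  | 0 => hx
  | n + 1 => by rw [Function.iterate_succ_apply']; exact Tbeta_mem_Ioc β _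

lemma eps_nonneg (hβ : 0 < β) (hx : x ∈ Ioc 0 1) (n : ℕ) : 0 ≤ eps β x n := by
  have h : 0 < β * (Tbeta β)^[n] x := mul_pos hβ (iterate_Tbeta_mem_Ioc β hx n).1
  have := Int.ceil_pos.2 h
  unfold eps; omega

lemma eps_add (β y : ℝ) (p j : ℕ) : eps β y (p + j) = eps β ((Tbeta β)^[p] y) j := by
  rw [eps, eps, add_comm, Function.iterate_add_apply]

lemma eps_eq_iff {n : ℕ} {e : ℤ} :
    eps β y n = e ↔ (e : ℝ) < β * (Tbeta β)^[n] y ∧ β * (Tbeta β)^[n] y ≤ e + 1 := by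
  rw [eps, sub_eq_iff_eq_add, Int.ceil_eq_iff]
  push_cast
  rw [add_sub_cancel_right]

lemma iterate_Tbeta_succ (n : ℕ) :
    (Tbeta β)^[n + 1] y = β * (Tbeta β)^[n] y - eps β y n := by
  rw [Function.iterate_succ_apply', Tbeta, eps]
  push_cast
  ring

lemma iterate_Tbeta_eq_pow_mul {k : ℕ} (h : ∀ j < k, eps β z j = 0) :
    (Tbeta β)^[k] z = β ^ k * z := by
  induction k with
  | zero => simp
  | succ k ih =>
    rw [iterate_Tbeta_succ, ih fun j hj => h j (by omega), h k (by omega)]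
    ring

lemma eps_eq_zero_of_pow_mul_le_one (hβ : 1 ≤ β) (hz : 0 < z) {k : ℕ} (hk : β ^ k * z ≤ 1) :
    ∀ j < k, eps β z j = 0 := by
  intro j
  induction j using Nat.strong_induction_on with
  | _ j ih =>
    intro hj
    have hle : β ^ (j + 1) * z ≤ 1 := le_trans (by gcongr; exact hj) hk
    rw [eps_eq_iff, iterate_Tbeta_eq_pow_mul fun i hi => ih i hi (hi.trans hj), ← mul_assoc,
      ← pow_succ']
    push_cast
    exact ⟨by positivity, by linarith⟩

lemma In_succ (β x : ℝ) (n : ℕ) :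
    In β x (n + 1) = {y ∈ In β x n | eps β y n = eps β x n} := by
  ext y
  simp only [In, mem_ofPred_eq, Nat.lt_succ_iff_lt_or_eq, or_imp, forall_and, forall_eq,
    and_assoc]

lemma mem_In_self (hx : x ∈ Ioc 0 1) (n : ℕ) : x ∈ In β x n := ⟨hx, fun _ _ => rfl⟩

lemma In_subset_Ioc (β x : ℝ) (n : ℕ) : In β x n ⊆ Ioc 0 1 := sep_subset _ _

lemma In_eq_of_mem {n : ℕ} (hy : y ∈ In β x n) : In β y n = In β x n := by
  ext w
  exact ⟨fun hw => ⟨hw.1, fun j hj => (hw.2 j hj).trans (hy.2 j hj)⟩,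
    fun hw => ⟨hw.1, fun j hj => (hw.2 j hj).trans (hy.2 j hj).symm⟩⟩

theorem In_eq_preimage_affine (hβ : 0 < β) (hx : x ∈ Ioc 0 1) (n : ℕ) :
    ∃ c s : ℝ, 0 < s ∧ In β x n = (fun y => β ^ n * y - c) ⁻¹' Ioc 0 s ∧
      ∀ ⦃y⦄, y ∈ In β x n → (Tbeta β)^[n] y = β ^ n * y - c := by
  suffices ∃ c s : ℝ, In β x n = (fun y => β ^ n * y - c) ⁻¹' Ioc 0 s ∧
      ∀ ⦃y⦄, y ∈ In β x n → (Tbeta β)^[n] y = β ^ n * y - c by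
    obtain ⟨c, s, hIn, hT⟩ := this
    have hxs := mem_In_self (β := β) hx n
    rw [hIn] at hxs
    exact ⟨c, s, hxs.1.trans_le hxs.2, hIn, hT⟩
  induction n with
  | zero => exact ⟨0, 1, by ext y; simp [In], fun y _ => by simp⟩
  | succ n ih =>
    obtain ⟨c, s, hIn, hT⟩ := ih
    set e := eps β x n
    have he : (0 : ℝ) ≤ e := by exact_mod_cast eps_nonneg hβ hx n
    have hlin : ∀ y, β ^ (n + 1) * y - (β * c + e) = β * (β ^ n * y - c) - e := fun y => by ring
    refine ⟨β * c + e, min (β * s - e) 1, ?_, fun y hy => ?_⟩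
    · ext y
      rw [In_succ, mem_sep_iff, mem_preimage, hlin, mem_Ioc, le_min_iff]
      constructor
      · rintro ⟨hy, hye⟩
        rw [eps_eq_iff, hT hy] at hye
        have hz : β ^ n * y - c ∈ Ioc 0 s := by rw [hIn] at hy; exact hy
        have := mul_le_mul_of_nonneg_left hz.2 hβ.le
        exact ⟨by linarith, by linarith, by linarith⟩
      · rintro ⟨h0, hs, h1⟩
        have hz : β ^ n * y - c ∈ Ioc 0 s :=
          ⟨pos_of_mul_pos_right (by linarith) hβ.le, le_of_mul_le_mul_left (by linarith) hβ⟩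
        have hy : y ∈ In β x n := by rw [hIn]; exact hz
        refine ⟨hy, eps_eq_iff.2 ?_⟩
        rw [hT hy]
        exact ⟨by linarith, by linarith⟩
    · rw [In_succ] at hy
      rw [iterate_Tbeta_succ, hT hy.1, hy.2, hlin]

lemma volume_preimage_affine {b : ℝ} (hb : 0 < b) (c : ℝ) (S : Set ℝ) :
    volume ((fun y => b * y - c) ⁻¹' S) = ENNReal.ofReal b⁻¹ * volume S := by
  have : (fun y => b * y - c) ⁻¹' S = (b * ·) ⁻¹' ((· + -c) ⁻¹' S) := by
    ext y; simp [sub_eq_add_neg]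
  rw [this, Real.volume_preimage_mul_left hb.ne', measure_preimage_add_right,
    abs_of_pos (inv_pos.2 hb)]

lemma volume_In_ne_top (β x : ℝ) (n : ℕ) : volume (In β x n) ≠ ⊤ :=
  ((measure_mono (In_subset_Ioc β x n)).trans_lt measure_Ioc_lt_top).ne

lemma In_subset_ball (hβ : 0 < β) (hx : x ∈ Ioc 0 1) (n : ℕ) :
    In β x n ⊆ Metric.ball x (β⁻¹ ^ n) := by
  obtain ⟨c, -, -, -, hT⟩ := In_eq_preimage_affine hβ hx n
  intro y hy
  have hpos : 0 < β ^ n := pow_pos hβ n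
  have hdiff : β ^ n * (y - x) = (Tbeta β)^[n] y - (Tbeta β)^[n] x := by
    rw [hT hy, hT (mem_In_self hx n)]; ring
  have hy' := iterate_Tbeta_mem_Ioc β hy.1 n
  have hx' := iterate_Tbeta_mem_Ioc β hx n
  rw [Metric.mem_ball, Real.dist_eq, inv_pow, ← one_div, lt_div_iff₀' hpos,
    ← abs_of_pos hpos, ← abs_mul, hdiff, abs_sub_lt_iff]
  constructor <;> linarith [hy'.1, hy'.2, hx'.1, hx'.2]

lemma interior_In_nonempty (hβ : 0 < β) (hx : x ∈ Ioc 0 1) (n : ℕ) :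
    (interior (In β x n)).Nonempty := by
  obtain ⟨c, s, hs, hIn, -⟩ := In_eq_preimage_affine hβ hx n
  have hopen : IsOpen ((fun y => β ^ n * y - c) ⁻¹' Ioo 0 s) :=
    isOpen_Ioo.preimage (by fun_prop)
  refine ⟨(c + s / 2) / β ^ n, ?_⟩
  rw [hIn]
  refine interior_maximal (preimage_mono Ioo_subset_Ioc_self) hopen ?_
  have : β ^ n * ((c + s / 2) / β ^ n) - c = s / 2 := by field_simp; ring
  rw [mem_preimage, this]
  constructor <;> linarith

lemma len_In_pos (hβ : 0 < β) (hx : x ∈ Ioc 0 1) (n : ℕ) : 0 < len (In β x n) :=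
  ENNReal.toReal_pos
    (Measure.measure_pos_of_nonempty_interior _ (interior_In_nonempty hβ hx n)).ne'
    (volume_In_ne_top β x n)

lemma len_In_add_le (hβ : 0 < β) (hy : y ∈ Ioc 0 1) (p m : ℕ) :
    len (In β y (p + m)) ≤ len (In β ((Tbeta β)^[p] y) m) / β ^ p := by
  obtain ⟨c, -, -, -, hT⟩ := In_eq_preimage_affine hβ hy p
  have hsub : In β y (p + m) ⊆ (fun w => β ^ p * w - c) ⁻¹' In β ((Tbeta β)^[p] y) m := by
    intro w hw
    have hwp : w ∈ In β y p := ⟨hw.1, fun j hj => hw.2 j (by omega)⟩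
    rw [mem_preimage, ← hT hwp]
    refine ⟨iterate_Tbeta_mem_Ioc β hw.1 p, fun j hj => ?_⟩
    rw [← eps_add, ← eps_add]
    exact hw.2 (p + j) (by omega)
  have hpos : 0 < β ^ p := pow_pos hβ p
  have hvol := volume_preimage_affine hpos c (In β ((Tbeta β)^[p] y) m)
  have hfin : volume ((fun w => β ^ p * w - c) ⁻¹' In β ((Tbeta β)^[p] y) m) ≠ ⊤ := by
    rw [hvol]
    exact ENNReal.mul_ne_top ENNReal.ofReal_ne_top (volume_In_ne_top _ _ _)
  calc len (In β y (p + m))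
      ≤ (volume ((fun w => β ^ p * w - c) ⁻¹' In β ((Tbeta β)^[p] y) m)).toReal :=
        ENNReal.toReal_mono hfin (measure_mono hsub)
    _ = len (In β ((Tbeta β)^[p] y) m) / β ^ p := by
        rw [hvol, ENNReal.toReal_mul, ENNReal.toReal_ofReal (inv_nonneg.2 hpos.le), len,
          inv_mul_eq_div]

lemma len_In_one_le (hβ : 0 < β) (n : ℕ) :
    len (In β 1 n) ≤ (Tbeta β)^[n] 1 / β ^ n := by
  have h1 : (1 : ℝ) ∈ Ioc 0 1 := right_mem_Ioc.2 one_pos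
  obtain ⟨c, -, -, -, hT⟩ := In_eq_preimage_affine hβ h1 n
  have hpos : 0 < β ^ n := pow_pos hβ n
  have hsub : In β 1 n ⊆ Ioc (c / β ^ n) 1 := fun w hw => by
    have := (iterate_Tbeta_mem_Ioc β hw.1 n).1
    rw [hT hw] at this
    exact ⟨by rw [div_lt_iff₀ hpos]; linarith, hw.1.2⟩
  have hT1 : (Tbeta β)^[n] 1 = β ^ n - c := by rw [hT (mem_In_self h1 n), mul_one]
  have hc : c / β ^ n ≤ 1 := by
    rw [div_le_one hpos]; linarith [(iterate_Tbeta_mem_Ioc β h1 n).1]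
  calc len (In β 1 n) ≤ volume.real (Ioc (c / β ^ n) 1) :=
        ENNReal.toReal_mono measure_Ioc_lt_top.ne (measure_mono hsub)
    _ = (Tbeta β)^[n] 1 / β ^ n := by
        rw [Real.volume_real_Ioc_of_le hc, hT1]; field_simp

lemma eps_one_eq_zero_of_lt_tseq {m j : ℕ} (hj : j < tseq β m) : eps β 1 (m + j) = 0 := by
  by_cases hbdd : BddAbove {k : ℕ | ∀ j < k, eps β 1 (m + j) = 0}
  · exact Nat.sSup_mem ⟨0, fun _ h => absurd h (Nat.not_lt_zero _)⟩ hbdd j hj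
  · obtain ⟨k, hk, hjk⟩ := not_bddAbove_iff.1 hbdd j
    exact hk j hjk

lemma pow_tseq_mul_iterate_Tbeta_one_le (m : ℕ) : β ^ tseq β m * (Tbeta β)^[m] 1 ≤ 1 := by
  have hzero : ∀ j < tseq β m, eps β ((Tbeta β)^[m] 1) j = 0 := fun j hj => by
    rw [← eps_add]; exact eps_one_eq_zero_of_lt_tseq hj
  rw [← iterate_Tbeta_eq_pow_mul hzero]
  exact (iterate_Tbeta_mem_Ioc β (iterate_Tbeta_mem_Ioc β (right_mem_Ioc.2 one_pos) m) _).2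

lemma len_In_le_of_iterate_mem_In_one (hβ : 0 < β) (hy : y ∈ Ioc 0 1) {p m : ℕ}
    (h : (Tbeta β)^[p] y ∈ In β 1 m) : len (In β y (p + m)) ≤ (β ^ (p + m + tseq β m))⁻¹ := by
  have htail := pow_tseq_mul_iterate_Tbeta_one_le (β := β) m
  calc len (In β y (p + m)) ≤ len (In β 1 m) / β ^ p := by
        rw [← In_eq_of_mem h]; exact len_In_add_le hβ hy p m
    _ ≤ (Tbeta β)^[m] 1 / β ^ m / β ^ p := by gcongr; exact len_In_one_le hβ m
    _ ≤ (β ^ tseq β m)⁻¹ / β ^ m / β ^ p := by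
        gcongr; rwa [inv_eq_one_div, le_div_iff₀' (by positivity)]
    _ = (β ^ (p + m + tseq β m))⁻¹ := by rw [pow_add, pow_add]; field_simp

theorem exists_affine_branch_subset_In (hβ : 1 < β) (hx : x ∈ Ioc 0 1) (n : ℕ) :
    ∃ (p : ℕ) (A : ℝ), ∀ y, β ^ p * y - A ∈ Ioc 0 1 →
      y ∈ In β x n ∧ (Tbeta β)^[p] y = β ^ p * y - A := by
  have hβ0 : 0 < β := one_pos.trans hβ
  obtain ⟨c, s, hs, hIn, hT⟩ := In_eq_preimage_affine hβ0 hx n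
  obtain ⟨k, hk⟩ := exists_pow_lt_of_lt_one hs (inv_lt_one_of_one_lt₀ hβ)
  refine ⟨k + n, β ^ k * c, fun y hy => ?_⟩
  have hlin : β ^ (k + n) * y - β ^ k * c = β ^ k * (β ^ n * y - c) := by ring
  rw [hlin] at hy ⊢
  have hz : 0 < β ^ n * y - c := pos_of_mul_pos_right hy.1 (by positivity)
  have hzs : β ^ n * y - c ≤ s := by
    refine le_trans ?_ hk.le
    rw [inv_pow, inv_eq_one_div, le_div_iff₀' (by positivity)]
    linarith [hy.2]
  have hyIn : y ∈ In β x n := by rw [hIn]; exact ⟨hz, hzs⟩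
  refine ⟨hyIn, ?_⟩
  rw [Function.iterate_add_apply, hT hyIn,
    iterate_Tbeta_eq_pow_mul (eps_eq_zero_of_pow_mul_le_one hβ.le hz hy.2)]

lemma frequently_mul_le_tseq (hγ : γ < lam β) :
    ∃ᶠ m : ℕ in atTop, γ * m ≤ tseq β m := by
  rcases le_or_gt γ 0 with hγ0 | hγ0
  · exact Frequently.of_forall fun m =>
      (mul_nonpos_of_nonpos_of_nonneg hγ0 m.cast_nonneg).trans (Nat.cast_nonneg _)
  have hGam : ∃ᶠ n : ℕ in atTop, γ < Gam β n / n :=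
    frequently_lt_of_lt_limsup (isCoboundedUnder_le_of_le atTop fun n => by positivity) hγ
  by_contra hrare
  obtain ⟨M, hM⟩ := eventually_atTop.1 (not_frequently.1 hrare)
  have hGam_le : ∀ᶠ n : ℕ in atTop, (Gam β n : ℝ) / n ≤ γ := by
    filter_upwards [eventually_ge_atTop (M + 1),
      (tendsto_natCast_atTop_atTop.const_mul_atTop hγ0).eventually_ge_atTop (Gam β M : ℝ)]
      with n hnM hGM
    have hn : (0 : ℝ) < n := by exact_mod_cast (by omega : 0 < n)
    obtain ⟨k, hk, hGk⟩ := Finset.exists_mem_eq_sup (Finset.Icc 1 n)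
      ⟨1, Finset.mem_Icc.2 ⟨le_rfl, by omega⟩⟩ (tseq β)
    obtain ⟨hk1, hkn⟩ := Finset.mem_Icc.1 hk
    rw [div_le_iff₀ hn, Gam, hGk]
    rcases lt_or_ge k M with hkM | hkM
    · have : tseq β k ≤ Gam β M := Finset.le_sup (Finset.mem_Icc.2 ⟨hk1, hkM.le⟩)
      calc (tseq β k : ℝ) ≤ Gam β M := by exact_mod_cast this
        _ ≤ γ * n := hGM
    · calc (tseq β k : ℝ) ≤ γ * k := (not_le.1 (hM k hkM)).le
        _ ≤ γ * n := by gcongr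
  obtain ⟨n, hlt, hle⟩ := (hGam.and_eventually hGam_le).exists
  exact hlt.not_ge hle

def smallCylinderSet (β c : ℝ) (N : ℕ) : Set ℝ :=
  {x | ∃ n ≥ N, len (In β x n) ≤ β ^ (-(c * n))}

theorem interior_In_inter_smallCylinderSet_nonempty (hβ : 1 < β) (hc : c < 1 + lam β)
    (hx : x ∈ Ioc 0 1) (n N : ℕ) : (interior (In β x n ∩ smallCylinderSet β c N)).Nonempty := by
  have hβ0 : 0 < β := one_pos.trans hβ
  obtain ⟨p, A, hbranch⟩ := exists_affine_branch_subset_In hβ hx n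
  obtain ⟨γ, hγc, hγ⟩ := exists_between (by linarith : c - 1 < lam β)
  -- with `γ m ≤ t_m` this gives `c (p + m) ≤ p + m + t_m`
  have hlarge : ∀ᶠ m : ℕ in atTop, N ≤ m ∧ (c - 1) * p ≤ (γ - (c - 1)) * m :=
    (eventually_ge_atTop N).and <|
      (tendsto_natCast_atTop_atTop.const_mul_atTop (by linarith)).eventually_ge_atTop _
  obtain ⟨m, hmt, hmN, hmp⟩ := ((frequently_mul_le_tseq hγ).and_eventually hlarge).exists
  obtain ⟨z, hz⟩ := interior_In_nonempty hβ0 (right_mem_Ioc.2 one_pos) m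
  let V := (fun y => β ^ p * y - A) ⁻¹' interior (In β 1 m)
  have hVopen : IsOpen V := isOpen_interior.preimage (by fun_prop)
  have hzV : (z + A) / β ^ p ∈ V := by
    simp only [V, mem_preimage]
    rwa [mul_div_cancel₀ _ (by positivity), add_sub_cancel_right]
  refine ⟨_, interior_maximal (fun y hy => ?_) hVopen hzV⟩
  have hyT : β ^ p * y - A ∈ In β 1 m := interior_subset hy
  obtain ⟨hyIn, hTy⟩ := hbranch y hyT.1
  refine ⟨hyIn, p + m, by omega, ?_⟩
  rw [← hTy] at hyT
  calc len (In β y (p + m)) ≤ (β ^ (p + m + tseq β m))⁻¹ :=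
        len_In_le_of_iterate_mem_In_one hβ0 hyIn.1 hyT
    _ = β ^ (-((p + m + tseq β m : ℕ) : ℝ)) := by
        rw [Real.rpow_neg_natCast, zpow_neg, zpow_natCast]
    _ ≤ β ^ (-(c * ((p + m : ℕ) : ℝ))) := by
        apply Real.rpow_le_rpow_of_exponent_le hβ.le
        push_cast
        nlinarith

theorem isNowhereDense_Icc_diff_interior_smallCylinderSet (hβ : 1 < β) (hc : c < 1 + lam β)
    (N : ℕ) : IsNowhereDense (Icc 0 1 \ interior (smallCylinderSet β c N)) := by
  rw [(isClosed_Icc.sdiff isOpen_interior).isNowhereDense_iff, eq_empty_iff_forall_notMem]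
  intro x hx
  obtain ⟨r, hr, hball⟩ := Metric.isOpen_iff.1 isOpen_interior x hx
  replace hball := hball.trans interior_subset
  have hx0 : 0 < x := by
    have := (hball (show x - r / 2 ∈ Metric.ball x r by
      rw [Metric.mem_ball, Real.dist_eq, abs_of_neg (by linarith)]; linarith)).1.1
    linarith
  have hx1 : x ≤ 1 := (hball (Metric.mem_ball_self hr)).1.2
  obtain ⟨n, hn⟩ := exists_pow_lt_of_lt_one hr (inv_lt_one_of_one_lt₀ hβ)
  obtain ⟨y, hy⟩ := interior_In_inter_smallCylinderSet_nonempty hβ hc ⟨hx0, hx1⟩ n N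
  have hyball : y ∈ Metric.ball x r := Metric.ball_subset_ball hn.le
    (In_subset_ball (one_pos.trans hβ) ⟨hx0, hx1⟩ n (interior_subset hy).1)
  exact (hball hyball).2 (interior_mono inter_subset_right hy)

/-- The alternative `upperD β x = 0` is the junk value of an unbounded `limsup`. -/
lemma le_upperD_or_upperD_eq_zero (hβ : 1 < β) (hx : x ∈ Ioc 0 1)
    (h : ∃ᶠ n : ℕ in atTop, len (In β x n) ≤ β ^ (-(c * n))) :
    c ≤ upperD β x ∨ upperD β x = 0 := by
  have hβ0 : 0 < β := one_pos.trans hβ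
  have hfreq : ∃ᶠ n : ℕ in atTop, c ≤ -Real.logb β (len (In β x n)) / n := by
    refine (h.and_eventually (eventually_gt_atTop 0)).mono fun n ⟨hlen, hn⟩ => ?_
    have hlog := Real.logb_le_logb_of_le hβ (len_In_pos hβ0 hx n) hlen
    rw [Real.logb_rpow hβ0 hβ.ne'] at hlog
    rw [le_div_iff₀ (by exact_mod_cast hn)]
    linarith
  by_cases hbdd : IsBoundedUnder (· ≤ ·) atTop fun n : ℕ => -Real.logb β (len (In β x n)) / n
  · exact Or.inl (le_limsup_of_frequently_le hfreq hbdd)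
  · exact Or.inr (Real.limsup_of_not_isBoundedUnder hbdd)

end BetaExpansion

theorem E_delta_meagre_general (β : ℝ) (hβ : 1 < β)
    (δ : ℝ) (hδ1 : 1 < δ) (hδ2 : δ < 1 + lam β) :
    IsMeagre {x ∈ Ioc (0:ℝ) 1 | upperD β x = δ} := by
  obtain ⟨c, hδc, hc⟩ := exists_between hδ2
  refine (isMeagre_iUnion fun N =>
    (isNowhereDense_Icc_diff_interior_smallCylinderSet hβ hc N).isMeagre).mono ?_
  rintro x ⟨hx, hxδ⟩
  by_contra hnot
  have hfreq : ∃ᶠ n : ℕ in atTop, len (In β x n) ≤ β ^ (-(c * n)) := by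
    refine frequently_atTop.2 fun N => interior_subset (s := smallCylinderSet β c N) ?_
    by_contra hN
    exact hnot (mem_iUnion.2 ⟨N, Ioc_subset_Icc_self hx, hN⟩)
  rcases le_upperD_or_upperD_eq_zero hβ hx hfreq with h | h <;> linarith

/-- If `λ(β) > 0`, then for every `δ` with `1 < δ < 1 + λ(β)`, the set
`E_δ = {x ∈ (0,1] : limsup (−log_β |I_n(x)|)/n = δ}` is of the first category (meagre)
in `[0,1]`. -/
theorem E_delta_meagre (β : ℝ) (hβ : 1 < β) (hlam : 0 < lam β)
    (δ : ℝ) (hδ1 : 1 < δ) (hδ2 : δ < 1 + lam β) :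
    IsMeagre {x ∈ Ioc (0:ℝ) 1 | upperD β x = δ} :=
  E_delta_meagre_general β hβ δ hδ1 hδ2
end
end

section
/- Suppose λ(β) > 0. Then the irregular set D = {x ∈ (0,1] : liminf_{n→∞} (−log_β |I_n(x)|)/n < limsup_{n→∞} (−log_β |I_n(x)|)/n} is residual in [0,1]; that is, [0,1] \ D is of the first category (meagre) in [0,1]. -/
open MeasureTheory Filter Set

noncomputable section

/-!
Cylinders are intervals, `I_n(x) = (a, a + β^{-n} M_n(x)]`, and `M_n(x) = β^j (1 - z) + T^j z`
with `z = T^i x`, where `i + j = n` and `i` is the last time the cylinder was full. This is at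
least `β^{-(Γ_n+1)}`: if `z` shares the first `j` digits of `1` it equals `T^j 1`; otherwise `z`
leaves the cylinder of `1` at a first step `d < j`, which forces `1 - z ≥ β^{-(d+1)} T^{d+1} 1`;
and `T^m 1 > β^{-(t_m+1)}`. Hence `-log_β |I_n(x)| / n` lies between `1` and `1 + (Γ_n + 1)/n`,
and is bounded because `Γ_n / n` is.

Every cylinder contains a point `y` whose orbit hits `1` exactly at some time `q`; from then on
`|I_{q+j}(y)| = β^{-(q+j)} T^j 1`. With `j = 0` the ratio is exactly `1`; with `j` where a zero
block of length `t_j > λ n / 2` starts (`j ≤ n`, `q ≤ n`) it exceeds `1 + λ/4`. The ratio only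
depends on the cylinder, which has nonempty interior, so the points where the ratio is eventually
`≠ 1`, or eventually `≤ 1 + λ/4`, form meagre sets. Off these sets and `0`, the `liminf` is at
most `1` and the `limsup` at least `1 + λ/4`.
-/

open scoped Topology

namespace BetaExpansion

variable {β : ℝ}

theorem Tbeta_mem_Ioc (β x : ℝ) : Tbeta β x ∈ Ioc (0:ℝ) 1 := by
  have := Int.ceil_lt_add_one (β * x)
  have := Int.le_ceil (β * x)
  constructor <;> simp only [Tbeta] <;> linarith

theorem Tbeta_iterate_mem_Ioc (β : ℝ) {x : ℝ} (hx : x ∈ Ioc (0:ℝ) 1) :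
    ∀ n, (Tbeta β)^[n] x ∈ Ioc (0:ℝ) 1
  | 0 => hx
  | n + 1 => by rw [Function.iterate_succ_apply']; exact Tbeta_mem_Ioc β _

theorem Tbeta_iterate_succ (β x : ℝ) (n : ℕ) :
    (Tbeta β)^[n + 1] x = β * (Tbeta β)^[n] x - eps β x n := by
  rw [Function.iterate_succ_apply', Tbeta, eps]
  push_cast
  ring

theorem eps_iterate (x : ℝ) (m n : ℕ) : eps β ((Tbeta β)^[m] x) n = eps β x (m + n) := by
  rw [eps, eps, ← Function.iterate_add_apply, add_comm]

theorem eps_eq_iff (β x : ℝ) (n : ℕ) (e : ℤ) :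
    eps β x n = e ↔ (e:ℝ) < β * (Tbeta β)^[n] x ∧ β * (Tbeta β)^[n] x ≤ e + 1 := by
  rw [eps, sub_eq_iff_eq_add, Int.ceil_eq_iff]
  push_cast
  rw [add_sub_cancel_right]

theorem eps_nonneg (hβ : 0 < β) {x : ℝ} (hx : x ∈ Ioc (0:ℝ) 1) (n : ℕ) : 0 ≤ eps β x n := by
  have : 0 < ⌈β * (Tbeta β)^[n] x⌉ :=
    Int.ceil_pos.2 (mul_pos hβ (Tbeta_iterate_mem_Ioc β hx n).1)
  rw [eps]
  omega

theorem iterate_eq_of_eps_eq {x y : ℝ} {n : ℕ} (h : ∀ j < n, eps β y j = eps β x j) :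
    (Tbeta β)^[n] y = (Tbeta β)^[n] x + β ^ n * (y - x) := by
  induction n with
  | zero => simp
  | succ n ih =>
    rw [Tbeta_iterate_succ, Tbeta_iterate_succ, ih fun j hj => h j (by omega), h n (by omega)]
    ring

theorem mem_In_succ {x y : ℝ} {n : ℕ} :
    y ∈ In β x (n + 1) ↔ y ∈ In β x n ∧ eps β y n = eps β x n := by
  simp only [In, mem_ofPred_eq, Nat.lt_succ_iff_lt_or_eq, or_imp, forall_and, forall_eq, and_assoc]

theorem In_mono {x : ℝ} {m n : ℕ} (h : m ≤ n) : In β x n ⊆ In β x m :=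
  fun _ hy => ⟨hy.1, fun j hj => hy.2 j (hj.trans_le h)⟩

theorem In_eq_of_mem {x y : ℝ} {n : ℕ} (h : y ∈ In β x n) : In β y n = In β x n := by
  ext w
  exact ⟨fun hw => ⟨hw.1, fun j hj => (hw.2 j hj).trans (h.2 j hj)⟩,
    fun hw => ⟨hw.1, fun j hj => (hw.2 j hj).trans (h.2 j hj).symm⟩⟩

theorem mem_In_self {x : ℝ} (hx : x ∈ Ioc (0:ℝ) 1) (n : ℕ) : x ∈ In β x n :=
  ⟨hx, fun _ _ => rfl⟩

/-- `normLen β x n = β ^ n * |I_n(x)|` (see `len_In`); the recursion tracks the right endpoint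
of the cylinder, which is cut either by the previous cylinder or by the next digit. -/
def normLen (β x : ℝ) : ℕ → ℝ
  | 0 => 1
  | n + 1 => min (β * normLen β x n - eps β x n) 1

theorem normLen_le_one (x : ℝ) : ∀ n, normLen β x n ≤ 1
  | 0 => le_rfl
  | _ + 1 => min_le_right _ _

theorem iterate_le_normLen (hβ : 0 ≤ β) {x : ℝ} (hx : x ∈ Ioc (0:ℝ) 1) :
    ∀ n, (Tbeta β)^[n] x ≤ normLen β x n
  | 0 => hx.2
  | n + 1 => by
    rw [normLen, Tbeta_iterate_succ]
    refine le_min ?_ ?_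
    · have := iterate_le_normLen hβ hx n
      gcongr
    · rw [← Tbeta_iterate_succ]; exact (Tbeta_iterate_mem_Ioc β hx _).2

theorem normLen_pos (hβ : 0 ≤ β) {x : ℝ} (hx : x ∈ Ioc (0:ℝ) 1) (n : ℕ) : 0 < normLen β x n :=
  (Tbeta_iterate_mem_Ioc β hx n).1.trans_le (iterate_le_normLen hβ hx n)

/-- `T^n x + β^n (y - x)` is `β^n` times the distance from `y` to the left end of `I_n(x)`. -/
theorem mem_In_iff (hβ : 0 < β) {x : ℝ} (hx : x ∈ Ioc (0:ℝ) 1) {y : ℝ} (n : ℕ) :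
    y ∈ In β x n ↔ 0 < (Tbeta β)^[n] x + β ^ n * (y - x) ∧
      (Tbeta β)^[n] x + β ^ n * (y - x) ≤ normLen β x n := by
  induction n with
  | zero => simp [In, normLen]
  | succ n ih =>
    set u := (Tbeta β)^[n] x + β ^ n * (y - x)
    have hu : (Tbeta β)^[n + 1] x + β ^ (n + 1) * (y - x) = β * u - eps β x n := by
      rw [Tbeta_iterate_succ, pow_succ]; ring
    have he : (0:ℝ) ≤ eps β x n := by exact_mod_cast eps_nonneg hβ hx n
    have hTy (hy : y ∈ In β x n) : (Tbeta β)^[n] y = u := iterate_eq_of_eps_eq hy.2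
    rw [mem_In_succ, hu, normLen, le_min_iff]
    constructor
    · rintro ⟨hy, hdigit⟩
      obtain ⟨hu0, huM⟩ := ih.1 hy
      rw [eps_eq_iff, hTy hy] at hdigit
      refine ⟨by linarith, by nlinarith, by linarith⟩
    · rintro ⟨hu0, huM, hu1⟩
      have hy : y ∈ In β x n := ih.2 ⟨by nlinarith, by nlinarith⟩
      rw [eps_eq_iff, hTy hy]
      exact ⟨hy, by linarith, by linarith⟩

theorem In_eq_Ioc (hβ : 0 < β) {x : ℝ} (hx : x ∈ Ioc (0:ℝ) 1) (n : ℕ) :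
    In β x n = Ioc (x - (β ^ n)⁻¹ * (Tbeta β)^[n] x)
      (x - (β ^ n)⁻¹ * (Tbeta β)^[n] x + (β ^ n)⁻¹ * normLen β x n) := by
  have hb : 0 < β ^ n := pow_pos hβ n
  ext y
  have hy : y - (x - (β ^ n)⁻¹ * (Tbeta β)^[n] x) =
      (β ^ n)⁻¹ * ((Tbeta β)^[n] x + β ^ n * (y - x)) := by
    field_simp
    ring
  rw [mem_In_iff hβ hx, mem_Ioc, ← sub_pos (a := y), ← sub_le_iff_le_add', hy,
    mul_pos_iff_of_pos_left (inv_pos.2 hb), mul_le_mul_iff_of_pos_left (inv_pos.2 hb)]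

theorem len_In (hβ : 0 < β) {x : ℝ} (hx : x ∈ Ioc (0:ℝ) 1) (n : ℕ) :
    len (In β x n) = (β ^ n)⁻¹ * normLen β x n := by
  rw [In_eq_Ioc hβ hx, len, Real.volume_Ioc, add_sub_cancel_left, ENNReal.toReal_ofReal]
  exact mul_nonneg (by positivity) (normLen_pos hβ.le hx n).le

theorem neg_logb_len_In (hβ : 1 < β) {x : ℝ} (hx : x ∈ Ioc (0:ℝ) 1) (n : ℕ) :
    -Real.logb β (len (In β x n)) = n - Real.logb β (normLen β x n) := by
  have hβ0 : 0 < β := by linarith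
  rw [len_In hβ0 hx, Real.logb_mul (by positivity) (normLen_pos hβ0.le hx n).ne', Real.logb_inv,
    Real.logb_pow, Real.logb_self_eq_one hβ]
  ring

theorem iterate_add_of_eps_eq_zero {x : ℝ} {n k : ℕ} (h : ∀ j < k, eps β x (n + j) = 0) :
    (Tbeta β)^[n + k] x = β ^ k * (Tbeta β)^[n] x := by
  induction k with
  | zero => simp
  | succ k ih =>
    rw [← add_assoc, Tbeta_iterate_succ, ih fun j hj => h j (by omega), h k (by omega)]
    push_cast
    ring

theorem one_mem_Ioc : (1:ℝ) ∈ Ioc (0:ℝ) 1 := right_mem_Ioc.2 one_pos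

section OrbitOfOne

variable (hβ : 1 < β)
include hβ

theorem tseq_bddAbove (n : ℕ) : BddAbove {k : ℕ | ∀ j < k, eps β 1 (n + j) = 0} := by
  have hpos := (Tbeta_iterate_mem_Ioc β one_mem_Ioc n).1
  obtain ⟨K, hK⟩ := pow_unbounded_of_one_lt ((Tbeta β)^[n] 1)⁻¹ hβ
  refine ⟨K, fun k hk => ?_⟩
  by_contra! hKk
  have h1 := (Tbeta_iterate_mem_Ioc β one_mem_Ioc (n + k)).2
  rw [iterate_add_of_eps_eq_zero hk] at h1
  rw [inv_lt_iff_one_lt_mul₀ hpos] at hK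
  nlinarith [pow_lt_pow_right₀ hβ hKk]

theorem eps_one_eq_zero_of_lt_tseq (n : ℕ) : ∀ j < tseq β n, eps β 1 (n + j) = 0 :=
  Nat.sSup_mem ⟨0, by simp⟩ (tseq_bddAbove hβ n)

theorem eps_one_tseq_ne_zero (n : ℕ) : eps β 1 (n + tseq β n) ≠ 0 := fun h0 => by
  have : tseq β n + 1 ≤ tseq β n := le_csSup (tseq_bddAbove hβ n) fun j hj => by
    rcases Nat.lt_succ_iff_lt_or_eq.1 hj with hj | rfl
    exacts [eps_one_eq_zero_of_lt_tseq hβ n j hj, h0]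
  omega

theorem logb_iterate_one_le (n : ℕ) : Real.logb β ((Tbeta β)^[n] 1) ≤ -tseq β n := by
  have h := (Tbeta_iterate_mem_Ioc β one_mem_Ioc (n + tseq β n)).2
  rw [iterate_add_of_eps_eq_zero (eps_one_eq_zero_of_lt_tseq hβ n)] at h
  have hT : (Tbeta β)^[n] 1 ≤ (β ^ tseq β n)⁻¹ := by
    rw [← one_div, le_div_iff₀ (by positivity)]
    linarith
  calc Real.logb β ((Tbeta β)^[n] 1)
      ≤ Real.logb β (β ^ tseq β n)⁻¹ :=
        Real.logb_le_logb_of_le hβ (Tbeta_iterate_mem_Ioc β one_mem_Ioc n).1 hT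
    _ = -tseq β n := by rw [Real.logb_inv, Real.logb_pow, Real.logb_self_eq_one hβ, mul_one]

theorem inv_pow_tseq_succ_lt_iterate_one (n : ℕ) : (β ^ (tseq β n + 1))⁻¹ < (Tbeta β)^[n] 1 := by
  have hdigit := ((eps_eq_iff β 1 (n + tseq β n) _).1 rfl).1
  have h1 : (1:ℝ) ≤ eps β 1 (n + tseq β n) := by
    have := eps_nonneg (zero_lt_one.trans hβ) one_mem_Ioc (n + tseq β n)
    have := eps_one_tseq_ne_zero hβ n
    exact_mod_cast (by omega : 1 ≤ eps β 1 (n + tseq β n))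
  rw [iterate_add_of_eps_eq_zero (eps_one_eq_zero_of_lt_tseq hβ n)] at hdigit
  rw [inv_lt_iff_one_lt_mul₀ (by positivity), pow_succ]
  linarith

theorem inv_pow_Gam_succ_lt_iterate_one {m ℓ : ℕ} (hm : 1 ≤ m) (hmℓ : m ≤ ℓ) :
    (β ^ (Gam β ℓ + 1))⁻¹ < (Tbeta β)^[m] 1 := by
  have : tseq β m ≤ Gam β ℓ := Finset.le_sup (Finset.mem_Icc.2 ⟨hm, hmℓ⟩)
  refine lt_of_le_of_lt ?_ (inv_pow_tseq_succ_lt_iterate_one hβ m)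
  exact inv_anti₀ (by positivity) (pow_le_pow_right₀ hβ.le (by omega))

end OrbitOfOne

theorem iterate_one_succ_le_of_eps_ne (hβ : 0 < β) {y : ℝ} (hy : y ≤ 1) {d : ℕ}
    (hagree : ∀ i < d, eps β y i = eps β 1 i) (hne : eps β y d ≠ eps β 1 d) :
    (Tbeta β)^[d + 1] 1 ≤ β ^ (d + 1) * (1 - y) := by
  have hT := iterate_eq_of_eps_eq hagree
  have hle : eps β y d ≤ eps β 1 d := by
    refine Int.sub_le_sub_right (Int.ceil_le_ceil (mul_le_mul_of_nonneg_left ?_ hβ.le)) 1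
    rw [hT]
    nlinarith [pow_pos hβ d]
  have hlt : (eps β y d : ℝ) + 1 ≤ eps β 1 d := by
    exact_mod_cast (by omega : eps β y d + 1 ≤ eps β 1 d)
  have hdigit := ((eps_eq_iff β y d _).1 rfl).2
  rw [hT] at hdigit
  rw [Tbeta_iterate_succ, pow_succ]
  linear_combination hdigit + hlt

theorem inv_pow_Gam_succ_le (hβ : 1 < β) (ℓ : ℕ) {y : ℝ} (hy : y ∈ Ioc (0:ℝ) 1) :
    (β ^ (Gam β ℓ + 1))⁻¹ ≤ β ^ ℓ * (1 - y) + (Tbeta β)^[ℓ] y := by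
  by_cases hagree : ∀ j < ℓ, eps β y j = eps β 1 j
  · rw [iterate_eq_of_eps_eq hagree]
    rcases Nat.eq_zero_or_pos ℓ with rfl | hℓ
    · simpa using inv_le_one_of_one_le₀ (one_le_pow₀ hβ.le)
    · linarith [inv_pow_Gam_succ_lt_iterate_one hβ hℓ le_rfl]
  classical
  push Not at hagree
  obtain ⟨hdℓ, hdne⟩ := Nat.find_spec hagree
  have hdmin (i : ℕ) (hi : i < Nat.find hagree) : eps β y i = eps β 1 i := by
    by_contra h
    exact Nat.find_min hagree hi ⟨hi.trans hdℓ, h⟩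
  have h1 := iterate_one_succ_le_of_eps_ne (zero_lt_one.trans hβ) hy.2 hdmin hdne
  have h2 := inv_pow_Gam_succ_lt_iterate_one hβ (Nat.succ_pos _) hdℓ
  have h3 : β ^ (Nat.find hagree + 1) * (1 - y) ≤ β ^ ℓ * (1 - y) :=
    mul_le_mul_of_nonneg_right (pow_le_pow_right₀ hβ.le hdℓ) (sub_nonneg.2 hy.2)
  linarith [(Tbeta_iterate_mem_Ioc β hy ℓ).1]

theorem exists_normLen_eq (x : ℝ) (n : ℕ) : ∃ i j, i + j = n ∧
    normLen β x n = β ^ j * (1 - (Tbeta β)^[i] x) + (Tbeta β)^[j] ((Tbeta β)^[i] x) := by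
  induction n with
  | zero => exact ⟨0, 0, rfl, by simp [normLen]⟩
  | succ n ih =>
    obtain ⟨i, j, rfl, h⟩ := ih
    rcases min_choice (β * normLen β x (i + j) - eps β x (i + j)) 1 with hmin | hmin
    · refine ⟨i, j + 1, by ring, ?_⟩
      rw [normLen, hmin, h, Tbeta_iterate_succ _ ((Tbeta β)^[i] x), eps_iterate, pow_succ]
      ring
    · exact ⟨i + j + 1, 0, by ring, by simp [normLen, hmin]⟩

theorem inv_pow_Gam_succ_le_normLen (hβ : 1 < β) {x : ℝ} (hx : x ∈ Ioc (0:ℝ) 1) (n : ℕ) :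
    (β ^ (Gam β n + 1))⁻¹ ≤ normLen β x n := by
  obtain ⟨i, j, rfl, h⟩ := exists_normLen_eq x n
  have hGam : Gam β j ≤ Gam β (i + j) := Finset.sup_mono (Finset.Icc_subset_Icc_right (by omega))
  rw [h]
  refine le_trans ?_ (inv_pow_Gam_succ_le hβ j (Tbeta_iterate_mem_Ioc β hx i))
  exact inv_anti₀ (by positivity) (pow_le_pow_right₀ hβ.le (by omega))

def cylRatio (β x : ℝ) (n : ℕ) : ℝ := -Real.logb β (len (In β x n)) / n

section Ratio

variable (hβ : 1 < β)
include hβ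

theorem one_le_cylRatio {x : ℝ} (hx : x ∈ Ioc (0:ℝ) 1) {n : ℕ} (hn : 1 ≤ n) :
    1 ≤ cylRatio β x n := by
  have hlog := Real.logb_nonpos hβ (normLen_pos (by linarith) hx n).le (normLen_le_one x n)
  rw [cylRatio, neg_logb_len_In hβ hx, le_div_iff₀ (by positivity), one_mul]
  linarith

theorem cylRatio_le {x : ℝ} (hx : x ∈ Ioc (0:ℝ) 1) {n : ℕ} (hn : 1 ≤ n) :
    cylRatio β x n ≤ 1 + (Gam β n + 1) / n := by
  have hlog := Real.logb_le_logb_of_le hβ (by positivity) (inv_pow_Gam_succ_le_normLen hβ hx n)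
  rw [Real.logb_inv, Real.logb_pow, Real.logb_self_eq_one hβ] at hlog
  rw [cylRatio, neg_logb_len_In hβ hx, div_le_iff₀ (by positivity), add_mul,
    div_mul_cancel₀ _ (by positivity)]
  push_cast at hlog
  linarith

theorem isBoundedUnder_cylRatio (hlam : 0 < lam β) {x : ℝ} (hx : x ∈ Ioc (0:ℝ) 1) :
    IsBoundedUnder (· ≤ ·) atTop (cylRatio β x) := by
  obtain ⟨A, hA⟩ : IsBoundedUnder (· ≤ ·) atTop fun n => (Gam β n : ℝ) / n := by
    by_contra h
    exact hlam.ne' (Real.limsup_of_not_isBoundedUnder h)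
  refine ⟨1 + A + 1, eventually_map.2 ?_⟩
  filter_upwards [eventually_ge_atTop 1, eventually_map.1 hA] with n hn hGam
  have : (1:ℝ) / n ≤ 1 := div_le_one_of_le₀ (by exact_mod_cast hn) (by positivity)
  linarith [cylRatio_le hβ hx hn, add_div (Gam β n : ℝ) 1 n]

theorem lowerD_lt_upperD (hlam : 0 < lam β) {x : ℝ} (hx : x ∈ Ioc (0:ℝ) 1) {a b : ℝ}
    (hab : a < b) (ha : ∃ᶠ n in atTop, cylRatio β x n ≤ a)
    (hb : ∃ᶠ n in atTop, b ≤ cylRatio β x n) : lowerD β x < upperD β x :=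
  calc lowerD β x ≤ a := liminf_le_of_frequently_le ha
        ⟨1, eventually_map.2 <| (eventually_ge_atTop 1).mono fun _ hn => one_le_cylRatio hβ hx hn⟩
    _ < b := hab
    _ ≤ upperD β x := le_limsup_of_frequently_le hb (isBoundedUnder_cylRatio hβ hlam hx)

end Ratio

theorem Tbeta_iterate_inv_pow (hβ : 1 < β) (k : ℕ) : (Tbeta β)^[k] (β ^ k)⁻¹ = 1 := by
  induction k with
  | zero => simp
  | succ k ih =>
    have hceil : ⌈(β ^ k)⁻¹⌉ = 1 := Int.ceil_eq_iff.2
      ⟨by norm_num; positivity, by exact_mod_cast inv_le_one_of_one_le₀ (one_le_pow₀ hβ.le)⟩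
    have hβk : β * (β ^ (k + 1))⁻¹ = (β ^ k)⁻¹ := by
      rw [pow_succ', mul_inv, ← mul_assoc, mul_inv_cancel₀ (by positivity), one_mul]
    rw [Function.iterate_succ_apply, Tbeta, hβk, hceil]
    simpa using ih

theorem exists_In_subset_of_mem_nhds (hβ : 1 < β) {z : ℝ} (hz : z ∈ Ioc (0:ℝ) 1) {U : Set ℝ}
    (hU : U ∈ 𝓝 z) : ∃ p, In β z p ⊆ U := by
  obtain ⟨ε, hε, hball⟩ := Metric.mem_nhds_iff.1 hU
  obtain ⟨p, hp⟩ := pow_unbounded_of_one_lt ε⁻¹ hβ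
  have hpε : (β ^ p)⁻¹ < ε := (inv_lt_comm₀ (by positivity) hε).2 hp
  have hlen : (β ^ p)⁻¹ * normLen β z p ≤ (β ^ p)⁻¹ :=
    mul_le_of_le_one_right (by positivity) (normLen_le_one z p)
  refine ⟨p, fun w hw => hball ?_⟩
  have hzp : z ∈ In β z p := mem_In_self hz p
  rw [In_eq_Ioc (by linarith) hz] at hw hzp
  rw [Metric.mem_ball, Real.dist_eq, abs_sub_lt_iff]
  constructor <;> linarith [hw.1, hw.2, hzp.1, hzp.2]

theorem interior_In_nonempty (hβ : 0 < β) {x : ℝ} (hx : x ∈ Ioc (0:ℝ) 1) (n : ℕ) :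
    (interior (In β x n)).Nonempty := by
  rw [In_eq_Ioc hβ hx, interior_Ioc, nonempty_Ioo, lt_add_iff_pos_right]
  exact mul_pos (by positivity) (normLen_pos hβ.le hx n)

/-- Take `y` with `T^p y = β^{-k}`: the next `k` digits vanish and carry `y` to `1`, after
which the cylinders of `y` copy those of `1`. -/
theorem exists_mem_In_iterate_eq_one (hβ : 1 < β) {z : ℝ} (hz : z ∈ Ioc (0:ℝ) 1) (p N : ℕ) :
    ∃ k ≥ N, ∃ y ∈ In β z p, (Tbeta β)^[p + k] y = 1 := by
  have hβ0 : 0 < β := by linarith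
  have hM := normLen_pos hβ0.le hz p
  obtain ⟨k₀, hk₀⟩ := pow_unbounded_of_one_lt (normLen β z p)⁻¹ hβ
  set k := max k₀ N
  have hk : (β ^ k)⁻¹ ≤ normLen β z p :=
    (inv_le_comm₀ (by positivity) hM).2 (hk₀.le.trans (pow_le_pow_right₀ hβ.le (le_max_left _ _)))
  set y := z + (β ^ p)⁻¹ * ((β ^ k)⁻¹ - (Tbeta β)^[p] z)
  have hu : (Tbeta β)^[p] z + β ^ p * (y - z) = (β ^ k)⁻¹ := by
    simp only [y]
    field_simp
    ring
  have hy : y ∈ In β z p := (mem_In_iff hβ0 hz p).2 (by rw [hu]; exact ⟨by positivity, hk⟩)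
  refine ⟨k, le_max_right _ _, y, hy, ?_⟩
  rw [add_comm, Function.iterate_add_apply, iterate_eq_of_eps_eq hy.2, hu, Tbeta_iterate_inv_pow hβ]

theorem normLen_add_of_iterate_eq_one (hβ : 0 ≤ β) {y : ℝ} (hy : y ∈ Ioc (0:ℝ) 1) {q : ℕ}
    (hq : (Tbeta β)^[q] y = 1) (j : ℕ) : normLen β y (q + j) = (Tbeta β)^[j] 1 := by
  induction j with
  | zero => exact le_antisymm (normLen_le_one y q) (hq ▸ iterate_le_normLen hβ hy q)
  | succ j ih =>
    rw [← add_assoc, normLen, ih, ← eps_iterate, hq, ← Tbeta_iterate_succ,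
      min_eq_left (Tbeta_iterate_mem_Ioc β one_mem_Ioc _).2]

theorem neg_logb_len_In_of_iterate_eq_one (hβ : 1 < β) {y : ℝ} (hy : y ∈ Ioc (0:ℝ) 1) {q : ℕ}
    (hq : (Tbeta β)^[q] y = 1) (j : ℕ) :
    -Real.logb β (len (In β y (q + j))) = (q + j : ℕ) - Real.logb β ((Tbeta β)^[j] 1) := by
  rw [neg_logb_len_In hβ hy, normLen_add_of_iterate_eq_one (by linarith) hy hq]

/-- Cylinders have nonempty interior, so a deep subcylinder violating `P` is an open set avoiding
`{x | ∀ n ≥ N, P n (I_n(x))}` inside any neighbourhood of a point of that set. -/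
theorem isMeagre_setOf_eventually_In (hβ : 1 < β) (P : ℕ → Set ℝ → Prop)
    (h : ∀ z ∈ Ioc (0:ℝ) 1, ∀ p N : ℕ, ∃ y ∈ In β z p, ∃ n, p ≤ n ∧ N ≤ n ∧ ¬P n (In β y n)) :
    IsMeagre {x ∈ Ioc (0:ℝ) 1 | ∀ᶠ n in atTop, P n (In β x n)} := by
  have hunion : {x ∈ Ioc (0:ℝ) 1 | ∀ᶠ n in atTop, P n (In β x n)} =
      ⋃ N, {x ∈ Ioc (0:ℝ) 1 | ∀ n ≥ N, P n (In β x n)} := by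
    ext x
    simp [eventually_atTop]
  rw [hunion]
  refine isMeagre_iUnion fun N => IsNowhereDense.isMeagre ?_
  rw [isNowhereDense_iff_forall_notMem_nhds]
  rintro z ⟨hz, -⟩ hcl
  obtain ⟨p, hp⟩ := exists_In_subset_of_mem_nhds hβ hz hcl
  obtain ⟨y, hy, n, hpn, hNn, hP⟩ := h z hz p N
  have hyn : In β y n ⊆ closure {x ∈ Ioc (0:ℝ) 1 | ∀ n ≥ N, P n (In β x n)} :=
    ((In_mono hpn).trans (In_eq_of_mem hy).subset).trans hp
  obtain ⟨w, hw⟩ := interior_In_nonempty (by linarith) hy.1 n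
  obtain ⟨x, hxy, hx, hxP⟩ :=
    mem_closure_iff.1 (hyn (interior_subset hw)) _ isOpen_interior hw
  exact hP (In_eq_of_mem (interior_subset hxy) ▸ hxP n hNn)

theorem exists_lt_tseq (hlam : 0 < lam β) (m : ℕ) :
    ∃ n ≥ m, ∃ j ≤ n, lam β / 2 * n < tseq β j := by
  have hfreq : ∃ᶠ n in atTop, lam β / 2 < (Gam β n : ℝ) / n :=
    frequently_lt_of_lt_limsup (isCoboundedUnder_le_of_le atTop fun n => by positivity)
      (half_lt_self hlam)
  obtain ⟨n, hn, hGam⟩ := frequently_atTop.1 hfreq (max m 1)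
  obtain ⟨j, hj, hjGam⟩ :=
    Finset.exists_mem_eq_sup (Finset.Icc 1 n) (Finset.nonempty_Icc.2 (by omega)) (tseq β)
  refine ⟨n, by omega, j, (Finset.mem_Icc.1 hj).2, ?_⟩
  rwa [lt_div_iff₀ (by exact_mod_cast (by omega : 0 < n)), show Gam β n = tseq β j from hjGam]
    at hGam

section Residual

variable (hβ : 1 < β)
include hβ

theorem isMeagre_eventually_cylRatio_ne_one :
    IsMeagre {x ∈ Ioc (0:ℝ) 1 | ∀ᶠ n in atTop, cylRatio β x n ≠ 1} := by
  refine isMeagre_setOf_eventually_In hβ (fun n s => -Real.logb β (len s) / n ≠ 1)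
    fun z hz p N => ?_
  obtain ⟨k, hk, y, hy, hyk⟩ := exists_mem_In_iterate_eq_one hβ hz p (N + 1)
  refine ⟨y, hy, p + k, by omega, by omega, not_not.2 ?_⟩
  have := neg_logb_len_In_of_iterate_eq_one hβ hy.1 hyk 0
  simp only [add_zero, Function.iterate_zero_apply, Real.logb_one, sub_zero] at this
  rw [this, div_self (Nat.cast_ne_zero.2 (by omega))]

theorem isMeagre_eventually_cylRatio_le (hlam : 0 < lam β) :
    IsMeagre {x ∈ Ioc (0:ℝ) 1 | ∀ᶠ n in atTop, cylRatio β x n ≤ 1 + lam β / 4} := by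
  refine isMeagre_setOf_eventually_In hβ (fun n s => -Real.logb β (len s) / n ≤ 1 + lam β / 4)
    fun z hz p N => ?_
  obtain ⟨k, hk, y, hy, hyk⟩ := exists_mem_In_iterate_eq_one hβ hz p (N + 1)
  obtain ⟨n, hn, j, hj, htj⟩ := exists_lt_tseq hlam (p + k)
  refine ⟨y, hy, p + k + j, by omega, by omega, not_le.2 ?_⟩
  have hlog := logb_iterate_one_le hβ j
  have hlen : ((p + k + j : ℕ) : ℝ) ≤ 2 * n := by exact_mod_cast (by omega : p + k + j ≤ 2 * n)
  rw [neg_logb_len_In_of_iterate_eq_one hβ hy.1 hyk, lt_div_iff₀ (Nat.cast_pos.2 (by omega))]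
  nlinarith

end Residual

end BetaExpansion

open BetaExpansion

/-- If `λ(β) > 0`, the irregular set
`D = {x ∈ (0,1] : liminf (−log_β |I_n(x)|)/n < limsup (−log_β |I_n(x)|)/n}`
is residual in `[0,1]`: its complement `[0,1] \ D` is of the first category (meagre). -/
theorem irregular_set_residual (β : ℝ) (hβ : 1 < β) (hlam : 0 < lam β) :
    IsMeagre (Icc (0:ℝ) 1 \ {x ∈ Ioc (0:ℝ) 1 | lowerD β x < upperD β x}) := by
  have hzero : IsMeagre ({0} : Set ℝ) := IsNowhereDense.isMeagre <| by
    rw [IsNowhereDense, closure_singleton, interior_singleton]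
  refine ((hzero.union (isMeagre_eventually_cylRatio_ne_one hβ)).union
    (isMeagre_eventually_cylRatio_le hβ hlam)).mono ?_
  rintro x ⟨hx, hirr⟩
  rcases hx.1.eq_or_lt with rfl | hx0
  · exact Or.inl (Or.inl rfl)
  have hx' : x ∈ Ioc (0:ℝ) 1 := ⟨hx0, hx.2⟩
  by_contra hreg
  simp only [mem_union, mem_ofPred_eq, not_or, hx', true_and, not_eventually, not_not,
    not_le] at hreg
  exact hirr ⟨hx', lowerD_lt_upperD hβ hlam hx' (by linarith : (1:ℝ) < 1 + lam β / 4)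
    (hreg.1.2.mono fun _ h => h.le) (hreg.2.mono fun _ h => h.le)⟩
end
end
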